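/- For every integer r ≥ 1, setting α(r) = −∑_{s=1}^{r} (v^s + v^{−s})/(v^s − v^{−s}) ∈ K, one has the second-order expansions [T;r]_{(r)} ≡ [r]! · (1 − α(r)(T−1)) mod (T−1)² and [T^{−1};r]_{(r)} ≡ [r]! · (1 + α(r)(T−1)) mod (T−1)². -/

import Mathlib

open PowerSeries Finset

noncomputable section

/-- The base field `K = ℚ(v)`. -/
abbrev K : Type := RatFunc ℚ

/-- The indeterminate `v` of `K = ℚ(v)`. -/
noncomputable def v : K := RatFunc.X

/-- The quantum integer `[m] = (v^m - v^{-m})/(v - v⁻¹)`. -/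
noncomputable def qint (m : ℤ) : K := (v ^ m - v ^ (-m)) / (v - v⁻¹)

/-- The quantum factorial `[n]! = [n][n-1]⋯[1]`. -/
noncomputable def qfact (n : ℕ) : K := ∏ i ∈ Finset.range n, qint (i + 1)

/-- The quantum binomial coefficient `[m choose n]`. -/
noncomputable def qbinom (m n : ℤ) : K :=
  if 0 ≤ n ∧ n ≤ m then qfact m.toNat / (qfact n.toNat * qfact (m - n).toNat) else 0

/-- The ring `R = K[[X]]`. -/
abbrev R : Type := PowerSeries K

/-- `T = 1 + X`, a unit of `R`. -/
noncomputable def T : R := 1 + PowerSeries.X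

/-- `T⁻¹`, the inverse of the unit `T` in `R`. -/
noncomputable def Tinv : R := Ring.inverse T

/-- `[T;r] = (v^r T - v^{-r} T⁻¹)/(v - v⁻¹)`. -/
noncomputable def bT (r : ℤ) : R :=
  PowerSeries.C (R := K) ((v - v⁻¹)⁻¹) *
    (PowerSeries.C (R := K) (v ^ r) * T - PowerSeries.C (R := K) (v ^ (-r)) * Tinv)

/-- `[T⁻¹;r] = (v^r T⁻¹ - v^{-r} T)/(v - v⁻¹)`. -/
noncomputable def bTinv (r : ℤ) : R :=
  PowerSeries.C (R := K) ((v - v⁻¹)⁻¹) *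
    (PowerSeries.C (R := K) (v ^ r) * Tinv - PowerSeries.C (R := K) (v ^ (-r)) * T)

/-- `[T;r]_{(j)} = [T;r][T;r-1]⋯[T;r-j+1]`. -/
noncomputable def bTdesc (r : ℤ) (j : ℕ) : R := ∏ i ∈ Finset.range j, bT (r - i)

/-- `[T;r]^{(j)} = [T;r+1][T;r+2]⋯[T;r+j]`. -/
noncomputable def bTasc (r : ℤ) (j : ℕ) : R := ∏ i ∈ Finset.range j, bT (r + 1 + i)

/-- `[T⁻¹;r]_{(j)} = [T⁻¹;r][T⁻¹;r-1]⋯[T⁻¹;r-j+1]`. -/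
noncomputable def bTinvDesc (r : ℤ) (j : ℕ) : R := ∏ i ∈ Finset.range j, bTinv (r - i)

/-!
Modulo `X²` we have `T ≡ 1 + X` and `T⁻¹ ≡ 1 - X`, so
`[T;m] ≡ [m] (1 + c_m X)` and `[T⁻¹;m] ≡ [m] (1 - c_m X)` with
`c_m = (v^m + v^{-m})/(v^m - v^{-m})`; this uses `v^m ≠ v^{-m}` for `m ≠ 0`, read off
from the degree of `v^m` as a rational function.
Since `X² ≡ 0`, a product of factors `a_i (1 + c_i X)` is `(∏ a_i)(1 + (∑ c_i) X)`,
and `∏_{s=1}^r [s] = [r]!`.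
-/

open RatFunc in
theorem RatFunc.intDegree_X_zpow {F : Type*} [Field F] (m : ℤ) :
    intDegree ((X : RatFunc F) ^ m) = m := by
  have hX : ∀ n : ℕ, intDegree ((X : RatFunc F) ^ n) = n := fun n => by
    rw [← algebraMap_X, ← map_pow, intDegree_polynomial, Polynomial.natDegree_X_pow]
  cases m with
  | ofNat n => simpa using hX n
  | negSucc n => rw [zpow_negSucc, intDegree_inv, hX]; rfl

theorem v_zpow_ne_zpow_neg {m : ℤ} (hm : m ≠ 0) : v ^ m ≠ v ^ (-m) := fun h => by
  have := congrArg RatFunc.intDegree h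
  simp only [v, RatFunc.intDegree_X_zpow] at this
  omega

theorem v_sub_v_inv_ne_zero : v - v⁻¹ ≠ 0 := by
  simpa [sub_ne_zero] using v_zpow_ne_zpow_neg one_ne_zero

/-- With `v = e^h` this is `coth (m h)`. -/
def qcoth (m : ℤ) : K := (v ^ m + v ^ (-m)) / (v ^ m - v ^ (-m))

theorem qint_mul_qcoth {m : ℤ} (hm : m ≠ 0) :
    qint m * qcoth m = (v - v⁻¹)⁻¹ * (v ^ m + v ^ (-m)) := by
  have := sub_ne_zero.2 (v_zpow_ne_zpow_neg hm)
  rw [qint, qcoth]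
  field_simp

theorem Finset.prod_range_intCast_sub_eq_prod_Icc {M : Type*} [CommMonoid M] (f : ℤ → M) (n : ℕ) :
    ∏ i ∈ range n, f (n - i) = ∏ s ∈ Icc 1 n, f s := by
  induction n with
  | zero => simp
  | succ n ih =>
    rw [prod_range_succ', prod_Icc_succ_top (by omega), ← ih]
    push_cast
    simp only [add_sub_add_right_eq_sub, sub_zero]

theorem qfact_eq_prod_Icc (n : ℕ) : qfact n = ∏ s ∈ Icc 1 n, qint s := by
  rw [qfact, ← Finset.prod_range_intCast_sub_eq_prod_Icc, ← Finset.prod_range_reflect]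
  refine Finset.prod_congr rfl fun i hi => ?_
  have := Finset.mem_range.1 hi
  congr 1
  omega

theorem Finset.prod_mul_one_add_mul_of_mul_self_eq_zero {ι S : Type*} [CommRing S]
    {x : S} (hx : x * x = 0) (s : Finset ι) (a c : ι → S) :
    ∏ i ∈ s, a i * (1 + c i * x) = (∏ i ∈ s, a i) * (1 + (∑ i ∈ s, c i) * x) := by
  classical
  induction s using Finset.induction with
  | empty => simp
  | insert j s hj ih =>
    rw [prod_insert hj, prod_insert hj, sum_insert hj, ih]
    linear_combination (a j * (∏ i ∈ s, a i) * c j * ∑ i ∈ s, c i) * hx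

section QBracket

variable {A : Type*} [CommRing A] [Algebra K A]

def qbracket (m : ℤ) (t t' : A) : A :=
  algebraMap K A (v - v⁻¹)⁻¹ * (algebraMap K A (v ^ m) * t - algebraMap K A (v ^ (-m)) * t')

theorem AlgHom.map_qbracket {B : Type*} [CommRing B] [Algebra K B] (φ : A →ₐ[K] B)
    (m : ℤ) (t t' : A) : φ (qbracket m t t') = qbracket m (φ t) (φ t') := by
  simp only [qbracket, map_mul, map_sub, AlgHom.commutes]

theorem qbracket_one_add_mul {m : ℤ} (hm : m ≠ 0) (ε : K) (x : A) :
    qbracket m (1 + algebraMap K A ε * x) (1 - algebraMap K A ε * x) =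
      algebraMap K A (qint m) * (1 + algebraMap K A (ε * qcoth m) * x) := by
  have hqint : qint m = (v - v⁻¹)⁻¹ * (v ^ m - v ^ (-m)) := by rw [qint, div_eq_mul_inv, mul_comm]
  have hqcoth := congrArg (algebraMap K A) (qint_mul_qcoth hm)
  rw [hqint] at hqcoth
  rw [qbracket, hqint]
  simp only [map_mul, map_add, map_sub] at hqcoth ⊢
  linear_combination -(algebraMap K A ε * x) * hqcoth

theorem prod_qbracket_one_add_mul {x : A} (hx : x * x = 0) (ε : K) (n : ℕ) :
    ∏ i ∈ range n, qbracket (n - i : ℤ) (1 + algebraMap K A ε * x) (1 - algebraMap K A ε * x) =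
      algebraMap K A (qfact n) *
        (1 + algebraMap K A (ε * ∑ s ∈ Icc 1 n, qcoth s) * x) := by
  rw [Finset.prod_range_intCast_sub_eq_prod_Icc (fun m => qbracket m _ _)]
  rw [Finset.prod_congr rfl fun s hs => qbracket_one_add_mul (by simp at hs; omega) ε x,
    Finset.prod_mul_one_add_mul_of_mul_self_eq_zero hx, ← map_prod, ← qfact_eq_prod_Icc,
    ← map_sum, ← Finset.mul_sum]

end QBracket

theorem bT_eq_qbracket (m : ℤ) : bT m = qbracket m T Tinv := rfl

theorem bTinv_eq_qbracket (m : ℤ) : bTinv m = qbracket m Tinv T := rfl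

theorem isUnit_T : IsUnit T := by
  simp [T, PowerSeries.isUnit_iff_constantCoeff]

section ModXSq

local notation "π" => Ideal.Quotient.mkₐ K (Ideal.span {(X : R) ^ 2})

theorem mkₐ_X_mul_self : π X * π X = 0 := by
  rw [← map_mul, ← sq, Ideal.Quotient.mkₐ_eq_mk, Ideal.Quotient.eq_zero_iff_mem]
  exact Ideal.subset_span rfl

theorem mkₐ_C (a : K) : π (C a) = algebraMap K _ a :=
  AlgHom.commutes _ a

theorem mkₐ_T : π T = 1 + π X := by
  rw [T, map_add, map_one]

theorem mkₐ_Tinv : π Tinv = 1 - π X := by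
  have h := congrArg π (Ring.mul_inverse_cancel T isUnit_T)
  rw [map_mul, map_one, mkₐ_T, ← Tinv] at h
  linear_combination (1 - π X) * h + π Tinv * mkₐ_X_mul_self

theorem mkₐ_bTdesc (r : ℕ) :
    π (bTdesc r r) = algebraMap K _ (qfact r) *
      (1 + algebraMap K _ (∑ s ∈ Icc 1 r, qcoth s) * π X) := by
  have h := prod_qbracket_one_add_mul mkₐ_X_mul_self 1 r
  simp only [map_one, one_mul] at h
  simpa only [bTdesc, map_prod, bT_eq_qbracket, AlgHom.map_qbracket, mkₐ_T, mkₐ_Tinv] using h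

theorem mkₐ_bTinvDesc (r : ℕ) :
    π (bTinvDesc r r) = algebraMap K _ (qfact r) *
      (1 - algebraMap K _ (∑ s ∈ Icc 1 r, qcoth s) * π X) := by
  have hTinv : 1 - π X = 1 + algebraMap K _ (-1) * π X := by rw [map_neg, map_one]; ring
  have hT : 1 + π X = 1 - algebraMap K _ (-1) * π X := by rw [map_neg, map_one]; ring
  simp only [bTinvDesc, map_prod, bTinv_eq_qbracket, AlgHom.map_qbracket, mkₐ_T, mkₐ_Tinv]
  rw [hTinv, hT, prod_qbracket_one_add_mul mkₐ_X_mul_self, map_mul, map_neg, map_one]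
  ring

end ModXSq

theorem stmt13_general (r : ℕ) :
    bTdesc r r - PowerSeries.C (R := K) (qfact r) *
        (1 - PowerSeries.C (R := K)
            (-∑ s ∈ Finset.Icc 1 r, (v ^ (s : ℤ) + v ^ (-(s : ℤ))) /
              (v ^ (s : ℤ) - v ^ (-(s : ℤ)))) * PowerSeries.X) ∈
      Ideal.span {(PowerSeries.X : R) ^ 2} ∧
    bTinvDesc r r - PowerSeries.C (R := K) (qfact r) *
        (1 + PowerSeries.C (R := K)
            (-∑ s ∈ Finset.Icc 1 r, (v ^ (s : ℤ) + v ^ (-(s : ℤ))) /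
              (v ^ (s : ℤ) - v ^ (-(s : ℤ)))) * PowerSeries.X) ∈
      Ideal.span {(PowerSeries.X : R) ^ 2} := by
  have hα : ∑ s ∈ Icc 1 r, (v ^ (s : ℤ) + v ^ (-(s : ℤ))) / (v ^ (s : ℤ) - v ^ (-(s : ℤ))) =
      ∑ s ∈ Icc 1 r, qcoth s := rfl
  simp only [hα, ← Ideal.Quotient.eq, ← Ideal.Quotient.mkₐ_eq_mk K, mkₐ_bTdesc, mkₐ_bTinvDesc,
    map_mul, map_add, map_sub, map_one, mkₐ_C, map_neg]
  constructor <;> ring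

/-- with `α(r) = -∑_{s=1}^{r} (v^s + v^{-s})/(v^s - v^{-s})`, one has
`[T;r]_{(r)} ≡ [r]!(1 - α(r)(T-1))` and `[T⁻¹;r]_{(r)} ≡ [r]!(1 + α(r)(T-1))`
mod `(T-1)²`. -/
theorem stmt13 (r : ℕ) (hr : 1 ≤ r) :
    bTdesc r r - PowerSeries.C (R := K) (qfact r) *
        (1 - PowerSeries.C (R := K)
            (-∑ s ∈ Finset.Icc 1 r, (v ^ (s : ℤ) + v ^ (-(s : ℤ))) /
              (v ^ (s : ℤ) - v ^ (-(s : ℤ)))) * PowerSeries.X) ∈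
      Ideal.span {(PowerSeries.X : R) ^ 2} ∧
    bTinvDesc r r - PowerSeries.C (R := K) (qfact r) *
        (1 + PowerSeries.C (R := K)
            (-∑ s ∈ Finset.Icc 1 r, (v ^ (s : ℤ) + v ^ (-(s : ℤ))) /
              (v ^ (s : ℤ) - v ^ (-(s : ℤ)))) * PowerSeries.X) ∈
      Ideal.span {(PowerSeries.X : R) ^ 2} :=
  stmt13_general r
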